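/- Size bound for taint-based SIC inference: define terms over a signature with maximal arity N inductively (variables, constants, and function applications f t₁ … tₖ with k ≤ N), with size(variable) = size(constant) = 1 and size(f t₁ … tₖ) = 1 + Σᵢ size(tᵢ). Suppose inferSIC is defined recursively by: inferSIC(constant) = ⊤, inferSIC(variable) a formula of size 1, and inferSIC(f t₁ … tₖ) = θ ∨ (inferSIC(t₁) ∧ ⋯ ∧ inferSIC(tₖ)) where θ = theorySIC(...) has size ≤ K, and where the disjunction/conjunction structure contributes 1 + (k−1) + 1 ≤ k + 1 connective nodes. Then for every term Φ, size(inferSIC(Φ)) ≤ (K + N) · size(Φ). -/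

import Mathlib

/-- Terms over a signature `F`: variables, constants and function applications. -/
inductive Term (F : Type) : Type where
  | var : Term F
  | const : Term F
  | app : F → List (Term F) → Term F

/-- Output formulas, with enough structure to measure sizes. -/
inductive Formula (F : Type) : Type where
  | top : Formula F
  | bot : Formula F
  | atom : F → Formula F
  | and : Formula F → Formula F → Formula F
  | or : Formula F → Formula F → Formula F

namespace Formula

def size {F : Type} : Formula F → ℕ
  | .top => 1
  | .bot => 1
  | .atom _ => 1
  | .and a b => 1 + a.size + b.size
  | .or a b => 1 + a.size + b.size

end Formula

namespace Term

mutual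
  /-- Size of a term. -/
  def size {F : Type} : Term F → ℕ
    | .var => 1
    | .const => 1
    | .app _ ts => 1 + sizeList ts
  def sizeList {F : Type} : List (Term F) → ℕ
    | [] => 0
    | t :: ts => size t + sizeList ts
end

mutual
  /-- All function applications in the term have arity at most `N`. -/
  def bounded {F : Type} (N : ℕ) : Term F → Prop
    | .var => True
    | .const => True
    | .app _ ts => ts.length ≤ N ∧ boundedList N ts
  def boundedList {F : Type} (N : ℕ) : List (Term F) → Prop
    | [] => True
    | t :: ts => bounded N t ∧ boundedList N ts
end

mutual
  /-- Taint-based SIC inference: `θ ∨ (ψ₁ ∧ ⋯ ∧ ψₖ)` at each application node,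
      where `θ` is provided by the theory-dependent procedure `th`. -/
  def inferSIC {F : Type} (th : F → List (Term F) → Formula F) : Term F → Formula F
    | .var => .bot -- a formula of size 1 (the condition "v ∉ x")
    | .const => .top
    | .app f ts => .or (th f ts) (conjList th ts)
  def conjList {F : Type} (th : F → List (Term F) → Formula F) :
      List (Term F) → Formula F
    | [] => .top
    | [t] => inferSIC th t
    | t :: ts => .and (inferSIC th t) (conjList th ts)
end

end Term

/-!
Charge every node of the term `K + N`. An application node `f t₁ … tₖ` produces, besides the
formulas of its arguments, the formula `θ` of size at most `K` and at most `max 2 k ≤ N`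
connective nodes, so structural induction over terms and argument lists closes the bound.
-/

namespace Term

variable {F : Type} (th : F → List (Term F) → Formula F)

theorem size_conjList_cons (t : Term F) (ts : List (Term F)) :
    (conjList th (t :: ts)).size =
      ts.length + ((t :: ts).map fun t => (inferSIC th t).size).sum := by
  induction ts generalizing t with
  | nil => simp [conjList]
  | cons u us ih =>
    simp only [conjList, Formula.size, ih, List.length_cons, List.map_cons, List.sum_cons]
    omega

/-- For `k ≥ 1` arguments the `∨` and the `k - 1` conjunctions are `k` nodes; for `k = 0` the `∨`
and the empty conjunction `⊤` are two. -/
theorem size_inferSIC_app_le (f : F) (ts : List (Term F)) :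
    (inferSIC th (app f ts)).size ≤
      (th f ts).size + max 2 ts.length + (ts.map fun t => (inferSIC th t).size).sum := by
  cases ts with
  | nil =>
    simp only [inferSIC, conjList, Formula.size, List.length_nil, List.map_nil, List.sum_nil]
    omega
  | cons t ts =>
    simp only [inferSIC, Formula.size, size_conjList_cons, List.length_cons]
    omega

variable {K N : ℕ}

mutual

theorem size_inferSIC_le (hK : ∀ (f : F) (ts : List (Term F)), (th f ts).size ≤ K) (hN : 2 ≤ N) :
    ∀ t : Term F, t.bounded N → (inferSIC th t).size ≤ (K + N) * t.size
  | .var, _ => by simp only [inferSIC, Formula.size, size]; omega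
  | .const, _ => by simp only [inferSIC, Formula.size, size]; omega
  | .app f ts, ⟨hlen, hts⟩ => by
    have hargs := sum_size_inferSIC_le hK hN ts hts
    calc (inferSIC th (app f ts)).size
        ≤ (th f ts).size + max 2 ts.length + (ts.map fun t => (inferSIC th t).size).sum :=
          size_inferSIC_app_le th f ts
      _ ≤ K + N + (K + N) * sizeList ts := by
          gcongr
          · exact hK f ts
          · exact max_le hN hlen
      _ = (K + N) * size (app f ts) := by simp only [size]; ring

theorem sum_size_inferSIC_le (hK : ∀ (f : F) (ts : List (Term F)), (th f ts).size ≤ K)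
    (hN : 2 ≤ N) : ∀ ts : List (Term F), boundedList N ts →
    (ts.map fun t => (inferSIC th t).size).sum ≤ (K + N) * sizeList ts
  | [], _ => by simp [sizeList]
  | t :: ts, ⟨ht, hts⟩ => by
    have hhead := size_inferSIC_le hK hN t ht
    have htail := sum_size_inferSIC_le hK hN ts hts
    simp only [List.map_cons, List.sum_cons, sizeList, Nat.mul_add]
    omega

end

end Term

/-- Proposition 5 (Size bound): taint-based SIC inference has linear size overhead. -/
theorem inferSIC_size_bound {F : Type}
    (th : F → List (Term F) → Formula F) (K N : ℕ)
    (hK : ∀ (f : F) (ts : List (Term F)), (th f ts).size ≤ K)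
    (hN : 2 ≤ N) :
    ∀ Φ : Term F, Φ.bounded N → (Term.inferSIC th Φ).size ≤ (K + N) * Φ.size :=
  Term.size_inferSIC_le th hK hN
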